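/- (Pathwise positivity preservation of the Lie–Trotter splitting scheme for systems.) Let N ≥ 2 and M ≥ 1 be integers, τ > 0 a real number, f₁, f₂ : ℝ × ℝ → ℝ arbitrary functions, and (w¹_{m,n}), (w²_{m,n}) for 0 ≤ m ≤ M−1, 1 ≤ n ≤ N−1 arbitrary real numbers. Let u₁,₀, u₂,₀ ∈ ℝ^{N−1} have all entries nonnegative, and define recursively, for m = 0, …, M−1: u₁,_{m+1} = exp(τ N² D^N) · (exp(√N f₁(u₁,_{m,n}, u₂,_{m,n}) w¹_{m,n} − N f₁(u₁,_{m,n}, u₂,_{m,n})² τ/2) · u₁,_{m,n})_{1 ≤ n ≤ N−1} and u₂,_{m+1} = exp(τ N² D^N) · (exp(√N f₂(u₁,_{m,n}, u₂,_{m,n}) w²_{m,n} − N f₂(u₁,_{m,n}, u₂,_{m,n})² τ/2) · u₂,_{m,n})_{1 ≤ n ≤ N−1}. Then all entries of u₁,_m and u₂,_m are nonnegative for every m ∈ {0, …, M}. -/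

import Mathlib

/-- The finite-difference discretization of the Laplacian with homogeneous Dirichlet
boundary conditions: the `(N-1) × (N-1)` matrix with `-2` on the diagonal, `1` on the
sub- and super-diagonal, and `0` elsewhere. -/
def DN (N : ℕ) : Matrix (Fin (N - 1)) (Fin (N - 1)) ℝ :=
  fun i j =>
    if (i : ℕ) = (j : ℕ) then -2
    else if (i : ℕ) + 1 = (j : ℕ) ∨ (j : ℕ) + 1 = (i : ℕ) then 1
    else 0

/-!
The Lie–Trotter step multiplies each entry by a positive scalar and then applies
`exp (τ N² Dᴺ)`. The matrix `τ N² Dᴺ` has nonnegative off-diagonal entries, and the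
exponential of any such (Metzler) matrix is entrywise nonnegative, so each step maps
nonnegative vectors to nonnegative vectors.
-/

namespace Matrix

variable {ι : Type*} [Fintype ι]

theorem mulVec_apply_nonneg {A : Matrix ι ι ℝ} {v : ι → ℝ} (hA : ∀ i j, 0 ≤ A i j)
    (hv : ∀ j, 0 ≤ v j) (i : ι) : 0 ≤ (A *ᵥ v) i :=
  Finset.sum_nonneg fun j _ => mul_nonneg (hA i j) (hv j)

variable [DecidableEq ι]

theorem exp_apply_nonneg {A : Matrix ι ι ℝ} (hA : ∀ i j, 0 ≤ A i j) (i j : ι) :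
    0 ≤ NormedSpace.exp A i j := by
  open scoped Norms.Operator in
  have hseries := NormedSpace.exp_series_hasSum_exp' (𝕂 := ℝ) A
  refine (Pi.hasSum.mp (Pi.hasSum.mp hseries i) j).nonneg fun n => ?_
  exact mul_nonneg (by positivity) (pow_apply_nonneg hA n i j)

/-- Shifting the diagonal by `c = ∑ₖ |A k k|` makes `A` entrywise nonnegative, and the
shift only rescales `exp A` by `exp (-c) > 0`. -/
theorem exp_apply_nonneg_of_offDiag_nonneg {A : Matrix ι ι ℝ}
    (hA : ∀ i j, i ≠ j → 0 ≤ A i j) (i j : ι) : 0 ≤ NormedSpace.exp A i j := by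
  set c := ∑ k, |A k k|
  set B : Matrix ι ι ℝ := A + diagonal fun _ => c with hB_def
  have hB : ∀ i j, 0 ≤ B i j := by
    intro i j
    rcases eq_or_ne i j with rfl | hij
    · have : |A i i| ≤ c := Finset.single_le_sum (f := fun k => |A k k|)
        (fun k _ => abs_nonneg _) (Finset.mem_univ i)
      rw [hB_def, add_apply, diagonal_apply_eq]
      linarith [neg_abs_le (A i i)]
    · rw [hB_def, add_apply, diagonal_apply_ne _ hij, add_zero]
      exact hA i j hij
  have hsplit : A = B + diagonal fun _ => -c := by
    rw [hB_def, add_assoc, diagonal_add]; simp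
  have hcomm : Commute B (diagonal fun _ => -c) := by
    rw [← smul_one_eq_diagonal]; exact (Commute.one_right _).smul_right (-c)
  rw [hsplit, exp_add_of_commute _ _ hcomm, exp_diagonal, mul_diagonal, Pi.exp_def,
    ← Real.exp_eq_exp_ℝ]
  exact mul_nonneg (exp_apply_nonneg hB i j) (Real.exp_nonneg _)

end Matrix

theorem DN_apply_nonneg_of_ne (N : ℕ) {i j : Fin (N - 1)} (hij : i ≠ j) : 0 ≤ DN N i j := by
  rw [DN, if_neg (Fin.val_injective.ne hij)]
  split_ifs <;> norm_num

theorem exp_heat_apply_nonneg (N : ℕ) {τ : ℝ} (hτ : 0 ≤ τ) (i j : Fin (N - 1)) :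
    0 ≤ NormedSpace.exp (τ • ((N : ℝ) ^ 2 • DN N)) i j :=
  Matrix.exp_apply_nonneg_of_offDiag_nonneg (fun _ _ hij => by
    simp only [Matrix.smul_apply, smul_eq_mul]
    have := DN_apply_nonneg_of_ne N hij
    positivity) i j

theorem lie_trotter_positivity_system_general (N M : ℕ)
    (τ : ℝ) (hτ : 0 < τ) (f₁ f₂ : ℝ × ℝ → ℝ)
    (w₁ w₂ : ℕ → Fin (N - 1) → ℝ)
    (u₁ u₂ : ℕ → Fin (N - 1) → ℝ)
    (h₁0 : ∀ n : Fin (N - 1), 0 ≤ u₁ 0 n)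
    (h₂0 : ∀ n : Fin (N - 1), 0 ≤ u₂ 0 n)
    (hrec₁ : ∀ m < M,
      u₁ (m + 1) = (NormedSpace.exp (τ • ((N : ℝ) ^ 2 • DN N))).mulVec
        (fun n : Fin (N - 1) =>
          Real.exp (Real.sqrt N * f₁ (u₁ m n, u₂ m n) * w₁ m n -
              (N : ℝ) * f₁ (u₁ m n, u₂ m n) ^ 2 * τ / 2) * u₁ m n))
    (hrec₂ : ∀ m < M,
      u₂ (m + 1) = (NormedSpace.exp (τ • ((N : ℝ) ^ 2 • DN N))).mulVec
        (fun n : Fin (N - 1) =>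
          Real.exp (Real.sqrt N * f₂ (u₁ m n, u₂ m n) * w₂ m n -
              (N : ℝ) * f₂ (u₁ m n, u₂ m n) ^ 2 * τ / 2) * u₂ m n)) :
    ∀ m ≤ M, ∀ n : Fin (N - 1), 0 ≤ u₁ m n ∧ 0 ≤ u₂ m n := by
  have hP := exp_heat_apply_nonneg N hτ.le
  intro m
  induction m with
  | zero => exact fun _ n => ⟨h₁0 n, h₂0 n⟩
  | succ m ih =>
    intro hm n
    have hu := ih (Nat.le_of_succ_le hm)
    rw [hrec₁ m hm, hrec₂ m hm]
    exact ⟨Matrix.mulVec_apply_nonneg hP (fun l => mul_nonneg (Real.exp_nonneg _) (hu l).1) n,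
      Matrix.mulVec_apply_nonneg hP (fun l => mul_nonneg (Real.exp_nonneg _) (hu l).2) n⟩

/-- Pathwise positivity preservation of the Lie–Trotter splitting
scheme for a system of two coupled stochastic heat equations: with `N ≥ 2`, `M ≥ 1`,
time step `τ > 0`, arbitrary functions `f₁, f₂ : ℝ × ℝ → ℝ`, arbitrary real increments
`w¹_{m,n}`, `w²_{m,n}`, and nonnegative initial vectors `u₁ 0` and `u₂ 0`, the coupled
Lie–Trotter recursion produces vectors `u₁ m` and `u₂ m` with all entries nonnegative
for every `m ∈ {0, …, M}`. -/
theorem lie_trotter_positivity_system (N M : ℕ) (hN : 2 ≤ N) (hM : 1 ≤ M)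
    (τ : ℝ) (hτ : 0 < τ) (f₁ f₂ : ℝ × ℝ → ℝ)
    (w₁ w₂ : ℕ → Fin (N - 1) → ℝ)
    (u₁ u₂ : ℕ → Fin (N - 1) → ℝ)
    (h₁0 : ∀ n : Fin (N - 1), 0 ≤ u₁ 0 n)
    (h₂0 : ∀ n : Fin (N - 1), 0 ≤ u₂ 0 n)
    (hrec₁ : ∀ m < M,
      u₁ (m + 1) = (NormedSpace.exp (τ • ((N : ℝ) ^ 2 • DN N))).mulVec
        (fun n : Fin (N - 1) =>
          Real.exp (Real.sqrt N * f₁ (u₁ m n, u₂ m n) * w₁ m n -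
              (N : ℝ) * f₁ (u₁ m n, u₂ m n) ^ 2 * τ / 2) * u₁ m n))
    (hrec₂ : ∀ m < M,
      u₂ (m + 1) = (NormedSpace.exp (τ • ((N : ℝ) ^ 2 • DN N))).mulVec
        (fun n : Fin (N - 1) =>
          Real.exp (Real.sqrt N * f₂ (u₁ m n, u₂ m n) * w₂ m n -
              (N : ℝ) * f₂ (u₁ m n, u₂ m n) ^ 2 * τ / 2) * u₂ m n)) :
    ∀ m ≤ M, ∀ n : Fin (N - 1), 0 ≤ u₁ m n ∧ 0 ≤ u₂ m n :=
  lie_trotter_positivity_system_general N M τ hτ f₁ f₂ w₁ w₂ u₁ u₂ h₁0 h₂0 hrec₁ hrec₂
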